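/- Let μ ∈ ℝ, σ > 0 and ρ > 0, and let r(x) = 2 φ_{μ,σ²}(x) Φ((μ - x)/√(σ² + ρ²)). Then r is a probability density on ℝ whose mean is μ - 2σ²/√(2π(2σ² + ρ²)) and whose variance is σ² [1 - 2σ²/(π(2σ² + ρ²))]. -/

import Mathlib

open MeasureTheory Real

/-- The density of the standard normal distribution. -/
noncomputable def stdGaussianPDF (x : ℝ) : ℝ :=
  (Real.sqrt (2 * Real.pi))⁻¹ * Real.exp (-x ^ 2 / 2)

/-- The cumulative distribution function of the standard normal distribution. -/
noncomputable def stdGaussianCDF (x : ℝ) : ℝ :=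
  ∫ t in Set.Iic x, stdGaussianPDF t

/-- The density of the normal distribution with mean `μ` and variance `σ²`. -/
noncomputable def normalPDF (μ σ : ℝ) (x : ℝ) : ℝ :=
  (σ * Real.sqrt (2 * Real.pi))⁻¹ * Real.exp (-(x - μ) ^ 2 / (2 * σ ^ 2))

/-! The density `r` is the location-scale transform `x ↦ σ⁻¹ f ((x - μ) / σ)` of the skew-normal
density `f t = 2 φ(t) Φ(α t)` with shape `α = -σ / √(σ² + ρ²)`. Since `φ` is even and
`Φ(-y) = 1 - Φ(y)`, multiplying an even integrand by `Φ(α t)` halves its integral, which gives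
`∫ f = 1` and `∫ t² f = 1`. Stein's identity `∫ t φ g = ∫ φ g'` with `g = Φ(α ·)` turns the first
moment into the Gaussian integral `∫ φ(t) φ(α t) dt = 1 / √(2π(1 + α²))`, so
`∫ t f = m := 2α / √(2π(1 + α²))`. The mean and variance of the transformed density are then
`μ + σ m` and `σ² (1 - m²)`. -/

open Set Filter ProbabilityTheory

lemma stdGaussianPDF_eq_gaussianPDFReal : stdGaussianPDF = gaussianPDFReal 0 1 := by
  ext x
  simp [stdGaussianPDF, gaussianPDFReal]

lemma stdGaussianPDF_nonneg (x : ℝ) : 0 ≤ stdGaussianPDF x := by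
  rw [stdGaussianPDF_eq_gaussianPDFReal]
  exact gaussianPDFReal_nonneg 0 1 x

lemma stdGaussianPDF_neg (x : ℝ) : stdGaussianPDF (-x) = stdGaussianPDF x := by
  simp only [stdGaussianPDF, neg_sq]

@[fun_prop]
lemma continuous_stdGaussianPDF : Continuous stdGaussianPDF := by
  unfold stdGaussianPDF
  fun_prop

lemma integrable_stdGaussianPDF : Integrable stdGaussianPDF := by
  rw [stdGaussianPDF_eq_gaussianPDFReal]
  exact integrable_gaussianPDFReal 0 1

lemma integral_stdGaussianPDF : ∫ x, stdGaussianPDF x = 1 := by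
  rw [stdGaussianPDF_eq_gaussianPDFReal]
  exact integral_gaussianPDFReal_eq_one 0 one_ne_zero

lemma integrable_pow_mul_stdGaussianPDF (n : ℕ) :
    Integrable fun x => x ^ n * stdGaussianPDF x := by
  have h := (integrable_rpow_mul_exp_neg_mul_sq (by norm_num : (0 : ℝ) < 2⁻¹)
    (by linarith [n.cast_nonneg (α := ℝ)] : (-1 : ℝ) < n)).const_mul (√(2 * π))⁻¹
  refine h.congr (Eventually.of_forall fun x => ?_)
  simp only [rpow_natCast, stdGaussianPDF]
  ring_nf

lemma hasDerivAt_stdGaussianPDF (x : ℝ) :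
    HasDerivAt stdGaussianPDF (-x * stdGaussianPDF x) x := by
  have hquad : HasDerivAt (fun y : ℝ => -y ^ 2 / 2) (-x) x :=
    (((hasDerivAt_pow 2 x).neg).div_const 2).congr_deriv (by ring)
  exact (hquad.exp.const_mul _).congr_deriv (by rw [stdGaussianPDF]; ring)

lemma integral_stdGaussianPDF_mul_stdGaussianPDF_comp_mul (α : ℝ) :
    ∫ x, stdGaussianPDF x * stdGaussianPDF (α * x) = (√(2 * π * (1 + α ^ 2)))⁻¹ := by
  have hexp : ∀ x : ℝ, stdGaussianPDF x * stdGaussianPDF (α * x)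
      = (√(2 * π))⁻¹ * (√(2 * π))⁻¹ * exp (-((1 + α ^ 2) / 2) * x ^ 2) := by
    intro x
    simp only [stdGaussianPDF]
    rw [mul_mul_mul_comm, ← exp_add]
    ring_nf
  have hπ : 0 ≤ 2 * π := by positivity
  simp_rw [hexp]
  rw [integral_const_mul, integral_gaussian,
    show π / ((1 + α ^ 2) / 2) = 2 * π / (1 + α ^ 2) by field_simp,
    sqrt_div hπ, sqrt_mul hπ]
  field_simp

lemma integrable_stdGaussianPDF_mul_stdGaussianPDF_comp_mul (α : ℝ) :
    Integrable fun x => stdGaussianPDF x * stdGaussianPDF (α * x) := by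
  refine Integrable.of_integral_ne_zero ?_
  rw [integral_stdGaussianPDF_mul_stdGaussianPDF_comp_mul]
  positivity

lemma stdGaussianCDF_nonneg (x : ℝ) : 0 ≤ stdGaussianCDF x :=
  setIntegral_nonneg measurableSet_Iic fun t _ => stdGaussianPDF_nonneg t

lemma stdGaussianCDF_le_one (x : ℝ) : stdGaussianCDF x ≤ 1 := by
  rw [← integral_stdGaussianPDF]
  exact setIntegral_le_integral integrable_stdGaussianPDF
    (Eventually.of_forall stdGaussianPDF_nonneg)

lemma stdGaussianCDF_neg (x : ℝ) : stdGaussianCDF (-x) = 1 - stdGaussianCDF x := by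
  have hIoi : stdGaussianCDF (-x) = ∫ t in Ioi x, stdGaussianPDF t := by
    rw [stdGaussianCDF, ← integral_comp_neg_Ioi]
    simp only [stdGaussianPDF_neg]
  rw [hIoi, ← integral_stdGaussianPDF, ← intervalIntegral.integral_Iic_add_Ioi
    integrable_stdGaussianPDF.integrableOn integrable_stdGaussianPDF.integrableOn, stdGaussianCDF]
  ring

lemma hasDerivAt_stdGaussianCDF (x : ℝ) :
    HasDerivAt stdGaussianCDF (stdGaussianPDF x) x := by
  have hFTC :
      stdGaussianCDF = fun y => stdGaussianCDF 0 + ∫ t in (0 : ℝ)..y, stdGaussianPDF t := by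
    ext y
    rw [← intervalIntegral.integral_Iic_sub_Iic integrable_stdGaussianPDF.integrableOn
      integrable_stdGaussianPDF.integrableOn, stdGaussianCDF, stdGaussianCDF]
    ring
  rw [hFTC]
  exact (intervalIntegral.integral_hasDerivAt_right integrable_stdGaussianPDF.intervalIntegrable
    (continuous_stdGaussianPDF.stronglyMeasurableAtFilter _ _)
    continuous_stdGaussianPDF.continuousAt).const_add _

@[fun_prop]
lemma continuous_stdGaussianCDF : Continuous stdGaussianCDF :=
  continuous_iff_continuousAt.2 fun x => (hasDerivAt_stdGaussianCDF x).continuousAt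

lemma MeasureTheory.Integrable.mul_stdGaussianCDF_comp_mul {f : ℝ → ℝ} (hf : Integrable f)
    (α : ℝ) :
    Integrable fun x => f x * stdGaussianCDF (α * x) := by
  refine hf.mul_bdd (c := 1) (by fun_prop) (Eventually.of_forall fun x => ?_)
  rw [norm_of_nonneg (stdGaussianCDF_nonneg _)]
  exact stdGaussianCDF_le_one _

lemma integral_mul_stdGaussianCDF_comp_mul_of_even {f : ℝ → ℝ} (hf : Integrable f)
    (heven : Function.Even f) (α : ℝ) :
    ∫ x, f x * stdGaussianCDF (α * x) = (∫ x, f x) / 2 := by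
  have hsymm := integral_neg_eq_self (fun x => f x * stdGaussianCDF (α * x)) volume
  simp only [show ∀ x, f (-x) = f x from heven, mul_neg, stdGaussianCDF_neg, mul_sub, mul_one]
    at hsymm
  rw [integral_sub hf (hf.mul_stdGaussianCDF_comp_mul α)] at hsymm
  linarith

lemma integral_id_mul_stdGaussianPDF_mul_eq {g g' : ℝ → ℝ} (hg : ∀ x, HasDerivAt g (g' x) x)
    (hφg : Integrable fun x => stdGaussianPDF x * g x)
    (hxφg : Integrable fun x => x * stdGaussianPDF x * g x)
    (hφg' : Integrable fun x => stdGaussianPDF x * g' x) :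
    ∫ x, x * stdGaussianPDF x * g x = ∫ x, stdGaussianPDF x * g' x := by
  have hderiv : ∀ x, HasDerivAt (fun y => -(stdGaussianPDF y * g y))
      (x * stdGaussianPDF x * g x - stdGaussianPDF x * g' x) x := fun x =>
    ((hasDerivAt_stdGaussianPDF x).mul (hg x)).neg.congr_deriv (by ring)
  have h := integral_eq_zero_of_hasDerivAt_of_integrable hderiv (hxφg.sub hφg') hφg.neg
  rw [integral_sub hxφg hφg'] at h
  linarith

lemma integral_sq_mul_stdGaussianPDF : ∫ x, x ^ 2 * stdGaussianPDF x = 1 := by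
  have hid := integral_id_mul_stdGaussianPDF_mul_eq (g := id) (g' := fun _ => 1) hasDerivAt_id
    ((integrable_pow_mul_stdGaussianPDF 1).congr (.of_forall fun x => by simp [mul_comm]))
    ((integrable_pow_mul_stdGaussianPDF 2).congr (.of_forall fun x => by simp only [id]; ring))
    (by simpa using integrable_stdGaussianPDF)
  calc ∫ x, x ^ 2 * stdGaussianPDF x = ∫ x, x * stdGaussianPDF x * id x := by
        congr 1; ext x; simp only [id]; ring
    _ = 1 := by simpa [integral_stdGaussianPDF] using hid

lemma integral_id_mul_stdGaussianPDF_mul_stdGaussianCDF_comp_mul (α : ℝ) :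
    ∫ x, x * stdGaussianPDF x * stdGaussianCDF (α * x) = α / √(2 * π * (1 + α ^ 2)) := by
  have hderiv (x : ℝ) :
      HasDerivAt (fun y => stdGaussianCDF (α * y)) (stdGaussianPDF (α * x) * α) x :=
    ((hasDerivAt_stdGaussianCDF (α * x)).comp x ((hasDerivAt_id x).const_mul α)).congr_deriv
      (by ring)
  rw [integral_id_mul_stdGaussianPDF_mul_eq hderiv
    (integrable_stdGaussianPDF.mul_stdGaussianCDF_comp_mul α)
    (by simpa using (integrable_pow_mul_stdGaussianPDF 1).mul_stdGaussianCDF_comp_mul α)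
    (by simpa only [mul_assoc] using
      (integrable_stdGaussianPDF_mul_stdGaussianPDF_comp_mul α).mul_const α)]
  simp_rw [← mul_assoc]
  rw [integral_mul_const, integral_stdGaussianPDF_mul_stdGaussianPDF_comp_mul]
  ring

noncomputable def skewNormalPDF (α x : ℝ) : ℝ :=
  2 * stdGaussianPDF x * stdGaussianCDF (α * x)

noncomputable def skewNormalMean (α : ℝ) : ℝ :=
  2 * α / √(2 * π * (1 + α ^ 2))

lemma skewNormalPDF_nonneg (α x : ℝ) : 0 ≤ skewNormalPDF α x :=
  mul_nonneg (mul_nonneg zero_le_two (stdGaussianPDF_nonneg x)) (stdGaussianCDF_nonneg _)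

lemma integrable_pow_mul_skewNormalPDF (α : ℝ) (n : ℕ) :
    Integrable fun x => x ^ n * skewNormalPDF α x := by
  refine (((integrable_pow_mul_stdGaussianPDF n).mul_stdGaussianCDF_comp_mul α).const_mul 2).congr
    (.of_forall fun x => ?_)
  simp only [skewNormalPDF]
  ring

lemma integral_pow_mul_skewNormalPDF_of_even (α : ℝ) {n : ℕ} (hn : Even n) :
    ∫ x, x ^ n * skewNormalPDF α x = ∫ x, x ^ n * stdGaussianPDF x := by
  have heven : Function.Even fun x : ℝ => x ^ n * stdGaussianPDF x := fun x => by
    simp only [hn.neg_pow, stdGaussianPDF_neg]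
  calc ∫ x, x ^ n * skewNormalPDF α x
        = 2 * ∫ x, x ^ n * stdGaussianPDF x * stdGaussianCDF (α * x) := by
        rw [← integral_const_mul]; congr 1; ext x; simp only [skewNormalPDF]; ring
    _ = ∫ x, x ^ n * stdGaussianPDF x := by
        rw [integral_mul_stdGaussianCDF_comp_mul_of_even (integrable_pow_mul_stdGaussianPDF n)
          heven]
        ring

lemma integral_skewNormalPDF (α : ℝ) : ∫ x, skewNormalPDF α x = 1 := by
  simpa [integral_stdGaussianPDF] using
    integral_pow_mul_skewNormalPDF_of_even α (n := 0) ⟨0, rfl⟩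

lemma integral_sq_mul_skewNormalPDF (α : ℝ) : ∫ x, x ^ 2 * skewNormalPDF α x = 1 := by
  rw [integral_pow_mul_skewNormalPDF_of_even α even_two, integral_sq_mul_stdGaussianPDF]

lemma integral_id_mul_skewNormalPDF (α : ℝ) :
    ∫ x, x * skewNormalPDF α x = skewNormalMean α := by
  rw [skewNormalMean, mul_div_assoc, ← integral_id_mul_stdGaussianPDF_mul_stdGaussianCDF_comp_mul,
    ← integral_const_mul]
  congr 1; ext x; simp only [skewNormalPDF]; ring

lemma integral_mul_inv_mul_comp_sub_div {σ : ℝ} (hσ : 0 < σ) (μ : ℝ) (g f : ℝ → ℝ) :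
    ∫ x, g x * (σ⁻¹ * f ((x - μ) / σ)) = ∫ t, g (μ + σ * t) * f t := by
  set G : ℝ → ℝ := fun t => σ⁻¹ * (g (μ + σ * t) * f t)
  have hG (x : ℝ) : g x * (σ⁻¹ * f ((x - μ) / σ)) = G ((x - μ) / σ) := by
    simp only [G, mul_div_cancel₀ _ hσ.ne', add_sub_cancel]
    ring
  simp_rw [hG]
  rw [integral_sub_right_eq_self (fun y => G (y / σ)) μ, Measure.integral_comp_div G σ,
    abs_of_pos hσ, smul_eq_mul, integral_const_mul, mul_inv_cancel_left₀ hσ.ne']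

lemma integral_add_mul_mul {f : ℝ → ℝ} (hf : Integrable f)
    (hf₁ : Integrable fun t => t * f t) (μ σ : ℝ) :
    ∫ t, (μ + σ * t) * f t = μ * (∫ t, f t) + σ * ∫ t, t * f t := by
  simp_rw [add_mul, mul_assoc]
  rw [integral_add (hf.const_mul μ) (hf₁.const_mul σ), integral_const_mul, integral_const_mul]

lemma integral_add_mul_sq_mul {f : ℝ → ℝ} (hf : Integrable f)
    (hf₁ : Integrable fun t => t * f t) (hf₂ : Integrable fun t => t ^ 2 * f t) (μ σ : ℝ) :
    ∫ t, (μ + σ * t) ^ 2 * f t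
      = μ ^ 2 * (∫ t, f t) + 2 * μ * σ * (∫ t, t * f t) + σ ^ 2 * ∫ t, t ^ 2 * f t := by
  have hexpand (t : ℝ) : (μ + σ * t) ^ 2 * f t
      = μ ^ 2 * f t + (2 * μ * σ * (t * f t) + σ ^ 2 * (t ^ 2 * f t)) := by ring
  simp_rw [hexpand]
  rw [integral_add (hf.const_mul _) ((hf₁.const_mul _).fun_add (hf₂.const_mul _)),
    integral_add (hf₁.const_mul _) (hf₂.const_mul _), integral_const_mul, integral_const_mul,
    integral_const_mul]
  ring

lemma normalPDF_eq_inv_mul_stdGaussianPDF (μ σ x : ℝ) :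
    normalPDF μ σ x = σ⁻¹ * stdGaussianPDF ((x - μ) / σ) := by
  simp only [normalPDF, stdGaussianPDF, div_pow, mul_inv]
  ring_nf

lemma integral_add_mul_mul_skewNormalPDF (α μ σ : ℝ) :
    ∫ t, (μ + σ * t) * skewNormalPDF α t = μ + σ * skewNormalMean α := by
  rw [integral_add_mul_mul (by simpa using integrable_pow_mul_skewNormalPDF α 0)
    (by simpa using integrable_pow_mul_skewNormalPDF α 1), integral_skewNormalPDF,
    integral_id_mul_skewNormalPDF, mul_one]

lemma integral_add_mul_sq_mul_skewNormalPDF_sub_sq (α μ σ : ℝ) :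
    (∫ t, (μ + σ * t) ^ 2 * skewNormalPDF α t) - (∫ t, (μ + σ * t) * skewNormalPDF α t) ^ 2
      = σ ^ 2 * (1 - skewNormalMean α ^ 2) := by
  rw [integral_add_mul_sq_mul (by simpa using integrable_pow_mul_skewNormalPDF α 0)
    (by simpa using integrable_pow_mul_skewNormalPDF α 1) (integrable_pow_mul_skewNormalPDF α 2),
    integral_skewNormalPDF, integral_id_mul_skewNormalPDF, integral_sq_mul_skewNormalPDF,
    integral_add_mul_mul_skewNormalPDF]
  ring

lemma two_mul_normalPDF_mul_stdGaussianCDF_div {σ : ℝ} (hσ : σ ≠ 0) (μ s x : ℝ) :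
    2 * normalPDF μ σ x * stdGaussianCDF ((μ - x) / s)
      = σ⁻¹ * skewNormalPDF (-σ / s) ((x - μ) / σ) := by
  have harg : -σ / s * ((x - μ) / σ) = (μ - x) / s := by
    field_simp
    ring
  rw [normalPDF_eq_inv_mul_stdGaussianPDF, skewNormalPDF, harg]
  ring

lemma mul_skewNormalMean_neg_div_sqrt {σ : ℝ} (hσ : 0 < σ) (ρ : ℝ) :
    σ * skewNormalMean (-σ / √(σ ^ 2 + ρ ^ 2))
      = -(2 * σ ^ 2 / √(2 * π * (2 * σ ^ 2 + ρ ^ 2))) := by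
  have hs : 0 < √(σ ^ 2 + ρ ^ 2) := by positivity
  have hrad : 2 * π * (1 + (-σ / √(σ ^ 2 + ρ ^ 2)) ^ 2)
      = 2 * π * (2 * σ ^ 2 + ρ ^ 2) / √(σ ^ 2 + ρ ^ 2) ^ 2 := by
    field_simp
    rw [sq_sqrt (by positivity)]
    ring
  rw [skewNormalMean, hrad, sqrt_div' _ (sq_nonneg _), sqrt_sq hs.le]
  field_simp

theorem loser_density_props_general (μ σ ρ : ℝ) (hσ : 0 < σ) :
    (∀ x, 0 ≤ 2 * normalPDF μ σ x
        * stdGaussianCDF ((μ - x) / Real.sqrt (σ ^ 2 + ρ ^ 2))) ∧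
      (∫ x, 2 * normalPDF μ σ x
        * stdGaussianCDF ((μ - x) / Real.sqrt (σ ^ 2 + ρ ^ 2))) = 1 ∧
      (∫ x, x * (2 * normalPDF μ σ x
          * stdGaussianCDF ((μ - x) / Real.sqrt (σ ^ 2 + ρ ^ 2))))
        = μ - 2 * σ ^ 2 / Real.sqrt (2 * Real.pi * (2 * σ ^ 2 + ρ ^ 2)) ∧
      (∫ x, x ^ 2 * (2 * normalPDF μ σ x
          * stdGaussianCDF ((μ - x) / Real.sqrt (σ ^ 2 + ρ ^ 2))))
        - (∫ x, x * (2 * normalPDF μ σ x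
          * stdGaussianCDF ((μ - x) / Real.sqrt (σ ^ 2 + ρ ^ 2)))) ^ 2
        = σ ^ 2 * (1 - 2 * σ ^ 2 / (Real.pi * (2 * σ ^ 2 + ρ ^ 2))) := by
  have hr (x : ℝ) := two_mul_normalPDF_mul_stdGaussianCDF_div hσ.ne' μ (√(σ ^ 2 + ρ ^ 2)) x
  have hcov (g : ℝ → ℝ) := integral_mul_inv_mul_comp_sub_div hσ μ g
    (skewNormalPDF (-σ / √(σ ^ 2 + ρ ^ 2)))
  have hmean := mul_skewNormalMean_neg_div_sqrt hσ ρ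
  simp only [hr]
  refine ⟨fun x => mul_nonneg (inv_nonneg.2 hσ.le) (skewNormalPDF_nonneg _ _), ?_, ?_, ?_⟩
  · simpa [integral_skewNormalPDF] using hcov fun _ => 1
  · rw [hcov fun x => x, integral_add_mul_mul_skewNormalPDF, hmean]
    ring
  · rw [hcov fun x => x ^ 2, hcov fun x => x, integral_add_mul_sq_mul_skewNormalPDF_sub_sq,
      mul_one_sub, ← mul_pow, hmean, neg_sq, div_pow, sq_sqrt (by positivity)]
    field_simp

/-- `r(x) = 2 φ_{μ,σ²}(x) Φ((μ-x)/√(σ²+ρ²))` is a probability density with mean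
`μ - 2σ²/√(2π(2σ²+ρ²))` and variance `σ² [1 - 2σ²/(π(2σ²+ρ²))]`. -/
theorem loser_density_props (μ σ ρ : ℝ) (hσ : 0 < σ) (hρ : 0 < ρ) :
    (∀ x, 0 ≤ 2 * normalPDF μ σ x
        * stdGaussianCDF ((μ - x) / Real.sqrt (σ ^ 2 + ρ ^ 2))) ∧
      (∫ x, 2 * normalPDF μ σ x
        * stdGaussianCDF ((μ - x) / Real.sqrt (σ ^ 2 + ρ ^ 2))) = 1 ∧
      (∫ x, x * (2 * normalPDF μ σ x
          * stdGaussianCDF ((μ - x) / Real.sqrt (σ ^ 2 + ρ ^ 2))))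
        = μ - 2 * σ ^ 2 / Real.sqrt (2 * Real.pi * (2 * σ ^ 2 + ρ ^ 2)) ∧
      (∫ x, x ^ 2 * (2 * normalPDF μ σ x
          * stdGaussianCDF ((μ - x) / Real.sqrt (σ ^ 2 + ρ ^ 2))))
        - (∫ x, x * (2 * normalPDF μ σ x
          * stdGaussianCDF ((μ - x) / Real.sqrt (σ ^ 2 + ρ ^ 2)))) ^ 2
        = σ ^ 2 * (1 - 2 * σ ^ 2 / (Real.pi * (2 * σ ^ 2 + ρ ^ 2))) :=
  loser_density_props_general μ σ ρ hσ
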